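/- The assignment E_{ij} ↦ ψ_i ψ_j* defines a Lie algebra representation of gl_∞ on F; equivalently, for all i, j, k, l ∈ ℤ the operator identity [ψ_i ψ_j*, ψ_k ψ_l*] = δ_{jk} ψ_i ψ_l* − δ_{li} ψ_k ψ_j* holds on F. -/

import Mathlib

open Finsupp

/-- A semi-infinite monomial: a strictly decreasing sequence `seq : ℕ → ℤ` such that
for some `m : ℤ` (its charge) one has `seq k = m - k` for all sufficiently large `k`. -/
structure SIM : Type where
  seq : ℕ → ℤ
  anti : StrictAnti seq
  ex_charge : ∃ m : ℤ, ∃ N : ℕ, ∀ k, N ≤ k → seq k = m - (k : ℤ)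

/-- Full fermionic Fock space: the free `ℂ`-vector space on the set of all
semi-infinite monomials. -/
abbrev FockF : Type := SIM →₀ ℂ

namespace SIM

/-- `φ` is a semi-infinite monomial of charge `m`. -/
def HasCharge (φ : SIM) (m : ℤ) : Prop := ∃ N : ℕ, ∀ k, N ≤ k → φ.seq k = m - (k : ℤ)

theorem exists_lt (φ : SIM) (j : ℤ) : ∃ n : ℕ, φ.seq n < j := by
  obtain ⟨m, N, hN⟩ := φ.ex_charge
  refine ⟨N + (m - j).toNat + 1, ?_⟩
  have h1 := hN (N + (m - j).toNat + 1) (by omega)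
  omega

/-- The position at which `j` is inserted into `φ`: the least `n` with `φ.seq n < j`.
If `i_s > j > i_{s+1}` this equals `s + 1`, and it equals `0` if `j > i_0`. -/
noncomputable def wedgePos (φ : SIM) (j : ℤ) : ℕ := Nat.find (φ.exists_lt j)

/-- The semi-infinite monomial obtained from `φ` by inserting `j` (assuming `j` does not
occur in `φ`). -/
noncomputable def insertSIM (φ : SIM) (j : ℤ) (hj : ∀ s, φ.seq s ≠ j) : SIM where
  seq k := if k < φ.wedgePos j then φ.seq k else if k = φ.wedgePos j then j else φ.seq (k - 1)
  anti := by
    have hs : φ.seq (φ.wedgePos j) < j := Nat.find_spec (φ.exists_lt j)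
    have hm : ∀ k, k < φ.wedgePos j → j < φ.seq k := by
      intro k hk
      have h1 := Nat.find_min (φ.exists_lt j) hk
      have h2 := hj k
      omega
    have ha : ∀ a b : ℕ, a < b → φ.seq b < φ.seq a := fun a b h => φ.anti h
    apply strictAnti_nat_of_succ_lt
    intro k
    rcases lt_trichotomy k (φ.wedgePos j) with hk | hk | hk
    · rcases Nat.lt_or_ge (k + 1) (φ.wedgePos j) with hk1 | hk1
      · rw [if_pos hk, if_pos hk1]
        exact ha k (k + 1) (by omega)
      · have hk1' : k + 1 = φ.wedgePos j := by omega
        rw [if_pos hk, if_neg (by omega), if_pos hk1']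
        exact hm k hk
    · rw [if_neg (by omega), if_neg (by omega), if_neg (by omega), if_pos hk,
        (by omega : k + 1 - 1 = k), hk]
      exact hs
    · rw [if_neg (by omega), if_neg (by omega), if_neg (by omega), if_neg (by omega),
        (by omega : k + 1 - 1 = k)]
      exact ha (k - 1) k (by omega)
  ex_charge := by
    obtain ⟨m, N, hN⟩ := φ.ex_charge
    refine ⟨m + 1, N + φ.wedgePos j + 1, fun k hk => ?_⟩
    rw [if_neg (by omega), if_neg (by omega)]
    have h3 := hN (k - 1) (by omega)
    omega

/-- The semi-infinite monomial obtained from `φ` by deleting the entry in position `s`. -/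
noncomputable def removeSIM (φ : SIM) (s : ℕ) : SIM where
  seq k := if k < s then φ.seq k else φ.seq (k + 1)
  anti := by
    apply strictAnti_nat_of_succ_lt
    intro k
    split_ifs <;> exact φ.anti (by omega)
  ex_charge := by
    obtain ⟨m, N, hN⟩ := φ.ex_charge
    refine ⟨m - 1, N + s, fun k hk => ?_⟩
    rw [if_neg (by omega)]
    have h3 := hN (k + 1) (by omega)
    omega

end SIM

open Classical in
/-- The wedging operator `ψ_j` on full fermionic Fock space.  On a basis element
`φ = (i_0, i_1, ...)` it is `0` if `j = i_s` for some `s`, and otherwise it is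
`(-1)^n` times the basis element obtained by inserting `j` in position `n`
(so `(-1)^{s+1}` when `i_s > j > i_{s+1}`, and `+1` when `j > i_0`). -/
noncomputable def psi (j : ℤ) : FockF →ₗ[ℂ] FockF :=
  Finsupp.lift FockF ℂ SIM fun φ =>
    if hj : ∀ s, φ.seq s ≠ j then
      ((-1 : ℂ) ^ (φ.wedgePos j)) • Finsupp.single (φ.insertSIM j hj) 1
    else 0

open Classical in
/-- The contracting operator `ψ_j^*` on full fermionic Fock space.  On a basis element
`φ = (i_0, i_1, ...)` it is `0` if `j ≠ i_s` for all `s`, and `(-1)^s` times the basis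
element obtained by deleting `i_s` if `j = i_s`. -/
noncomputable def psiStar (j : ℤ) : FockF →ₗ[ℂ] FockF :=
  Finsupp.lift FockF ℂ SIM fun φ =>
    if hj : ∃ s, φ.seq s = j then
      ((-1 : ℂ) ^ hj.choose) • Finsupp.single (φ.removeSIM hj.choose) 1
    else 0

/-! The CAR relations `ψ_i ψ_k + ψ_k ψ_i = 0`, `ψ_j* ψ_l* + ψ_l* ψ_j* = 0` and
`ψ_j* ψ_i + ψ_i ψ_j* = δ_{ij}` hold on every basis monomial: in the generic case the two
composites produce the same monomial, and the insertion/deletion positions differ by one in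
the two orders, so the signs cancel. The commutation relations of `gl_∞` then follow from
the CAR relations through the identity
`[AB, CD] = A{B,C}D - AC{B,D} + {A,C}DB - C{A,D}B` in any ring. -/

namespace SIM

theorem seq_injective : Function.Injective SIM.seq := by
  rintro ⟨_, _, _⟩ ⟨_, _, _⟩ rfl
  rfl

theorem seq_wedgePos_lt (φ : SIM) (j : ℤ) : φ.seq (φ.wedgePos j) < j :=
  Nat.find_spec (φ.exists_lt j)

theorem le_seq_of_lt_wedgePos (φ : SIM) {j : ℤ} {n : ℕ} (h : n < φ.wedgePos j) :
    j ≤ φ.seq n :=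
  not_lt.1 (Nat.find_min (φ.exists_lt j) h)

theorem wedgePos_le_of_seq_lt (φ : SIM) {j : ℤ} {n : ℕ} (h : φ.seq n < j) :
    φ.wedgePos j ≤ n :=
  Nat.find_le h

theorem wedgePos_eq (φ : SIM) {j : ℤ} {p : ℕ} (h_lt : φ.seq p < j)
    (h_le : ∀ n < p, j ≤ φ.seq n) : φ.wedgePos j = p :=
  (Nat.find_eq_iff _).2 ⟨h_lt, fun n hn => not_lt.2 (h_le n hn)⟩

theorem wedgePos_antitone (φ : SIM) : Antitone φ.wedgePos :=
  fun _ _ h => φ.wedgePos_le_of_seq_lt ((φ.seq_wedgePos_lt _).trans_le h)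

theorem insertSIM_seq (φ : SIM) (j : ℤ) (hj : ∀ s, φ.seq s ≠ j) (k : ℕ) :
    (φ.insertSIM j hj).seq k =
      if k < φ.wedgePos j then φ.seq k else if k = φ.wedgePos j then j else φ.seq (k - 1) :=
  rfl

theorem removeSIM_seq (φ : SIM) (s k : ℕ) :
    (φ.removeSIM s).seq k = if k < s then φ.seq k else φ.seq (k + 1) :=
  rfl

theorem insertSIM_seq_wedgePos (φ : SIM) {i : ℤ} (hi : ∀ s, φ.seq s ≠ i) :
    (φ.insertSIM i hi).seq (φ.wedgePos i) = i := by
  simp [insertSIM_seq]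

theorem insertSIM_seq_ne {φ : SIM} {i j : ℤ} (hi : ∀ s, φ.seq s ≠ i)
    (hj : ∀ s, φ.seq s ≠ j) (hij : i ≠ j) (s : ℕ) : (φ.insertSIM i hi).seq s ≠ j := by
  rw [insertSIM_seq]
  split_ifs
  exacts [hj s, hij, hj (s - 1)]

theorem exists_insertSIM_seq_eq {φ : SIM} {i : ℤ} (hi : ∀ s, φ.seq s ≠ i) (s : ℕ) :
    ∃ t, (φ.insertSIM i hi).seq t = φ.seq s := by
  by_cases h : s < φ.wedgePos i
  · exact ⟨s, by rw [insertSIM_seq, if_pos h]⟩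
  · exact ⟨s + 1, by rw [insertSIM_seq, if_neg (by omega), if_neg (by omega)]; rfl⟩

theorem removeSIM_seq_ne {φ : SIM} {i : ℤ} (hi : ∀ t, φ.seq t ≠ i) (s t : ℕ) :
    (φ.removeSIM s).seq t ≠ i := by
  rw [removeSIM_seq]
  split_ifs
  exacts [hi t, hi (t + 1)]

theorem removeSIM_seq_ne_seq (φ : SIM) (s t : ℕ) : (φ.removeSIM s).seq t ≠ φ.seq s := by
  rw [removeSIM_seq]
  split_ifs <;> exact fun h => by have := φ.anti.injective h; omega

theorem exists_removeSIM_seq_eq (φ : SIM) {s t : ℕ} (hts : t ≠ s) :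
    ∃ u, (φ.removeSIM s).seq u = φ.seq t := by
  by_cases h : t < s
  · exact ⟨t, by rw [removeSIM_seq, if_pos h]⟩
  · exact ⟨t - 1, by rw [removeSIM_seq, if_neg (by omega)]; congr 1; omega⟩

theorem wedgePos_removeSIM_seq (φ : SIM) (s : ℕ) : (φ.removeSIM s).wedgePos (φ.seq s) = s :=
  wedgePos_eq _ (by rw [removeSIM_seq, if_neg (lt_irrefl s)]; exact φ.anti s.lt_succ_self)
    fun n hn => by rw [removeSIM_seq, if_pos hn]; exact (φ.anti hn).le

theorem removeSIM_insertSIM (φ : SIM) {i : ℤ} (hi : ∀ s, φ.seq s ≠ i) :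
    (φ.insertSIM i hi).removeSIM (φ.wedgePos i) = φ := by
  refine seq_injective (funext fun n => ?_)
  simp only [removeSIM_seq, insertSIM_seq]
  split_ifs <;> first | rfl | omega

theorem insertSIM_removeSIM (φ : SIM) (s : ℕ) :
    (φ.removeSIM s).insertSIM (φ.seq s) (φ.removeSIM_seq_ne_seq s) = φ := by
  refine seq_injective (funext fun n => ?_)
  simp only [insertSIM_seq, wedgePos_removeSIM_seq, removeSIM_seq]
  split_ifs <;> first | rfl | omega | (congr 1; omega)

theorem wedgePos_insertSIM_of_lt {φ : SIM} {i k : ℤ} (hk : ∀ s, φ.seq s ≠ k) (hki : k < i) :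
    (φ.insertSIM k hk).wedgePos i = φ.wedgePos i := by
  have hpos := φ.wedgePos_antitone hki.le
  refine wedgePos_eq _ ?_ fun n hn => ?_
  · rw [insertSIM_seq]
    split_ifs
    exacts [φ.seq_wedgePos_lt i, hki, by omega]
  · rw [insertSIM_seq, if_pos (by omega)]
    exact φ.le_seq_of_lt_wedgePos hn

theorem wedgePos_insertSIM_of_gt {φ : SIM} {i k : ℤ} (hi : ∀ s, φ.seq s ≠ i) (hki : k < i) :
    (φ.insertSIM i hi).wedgePos k = φ.wedgePos k + 1 := by
  have hpos := φ.wedgePos_antitone hki.le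
  refine wedgePos_eq _ ?_ fun n hn => ?_
  · rw [insertSIM_seq, if_neg (by omega), if_neg (by omega), Nat.add_sub_cancel]
    exact φ.seq_wedgePos_lt k
  · rw [insertSIM_seq]
    split_ifs with h
    · exact hki.le.trans (φ.le_seq_of_lt_wedgePos h)
    · exact hki.le
    · exact φ.le_seq_of_lt_wedgePos (by omega)

theorem insertSIM_comm {φ : SIM} {i k : ℤ} (hi : ∀ s, φ.seq s ≠ i)
    (hk : ∀ s, φ.seq s ≠ k) (hki : k < i) :
    (φ.insertSIM k hk).insertSIM i (insertSIM_seq_ne hk hi hki.ne) =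
      (φ.insertSIM i hi).insertSIM k (insertSIM_seq_ne hi hk hki.ne') := by
  have hpos := φ.wedgePos_antitone hki.le
  refine seq_injective (funext fun n => ?_)
  simp only [insertSIM_seq, wedgePos_insertSIM_of_lt hk hki, wedgePos_insertSIM_of_gt hi hki]
  split_ifs <;> first | rfl | omega

theorem removeSIM_comm (φ : SIM) {s u : ℕ} (h : s ≤ u) :
    (φ.removeSIM (u + 1)).removeSIM s = (φ.removeSIM s).removeSIM u := by
  refine seq_injective (funext fun n => ?_)
  simp only [removeSIM_seq]
  split_ifs <;> first | rfl | omega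

theorem wedgePos_removeSIM_of_le {φ : SIM} {s : ℕ} {i : ℤ} (h : φ.wedgePos i ≤ s) :
    (φ.removeSIM s).wedgePos i = φ.wedgePos i := by
  refine wedgePos_eq _ ?_ fun n hn => ?_
  · rw [removeSIM_seq]
    split_ifs
    · exact φ.seq_wedgePos_lt i
    · exact (φ.anti (Nat.lt_succ_self _)).trans (φ.seq_wedgePos_lt i)
  · rw [removeSIM_seq, if_pos (by omega)]
    exact φ.le_seq_of_lt_wedgePos hn

theorem wedgePos_removeSIM_of_gt {φ : SIM} {s p : ℕ} {i : ℤ} (hp : φ.wedgePos i = p + 1)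
    (hs : s ≤ p) : (φ.removeSIM s).wedgePos i = p := by
  refine wedgePos_eq _ ?_ fun n hn => ?_
  · rw [removeSIM_seq, if_neg (by omega), ← hp]
    exact φ.seq_wedgePos_lt i
  · rw [removeSIM_seq]
    split_ifs <;> exact φ.le_seq_of_lt_wedgePos (by omega)

theorem insertSIM_removeSIM_comm_of_le {φ : SIM} {s : ℕ} {i : ℤ} (hi : ∀ t, φ.seq t ≠ i)
    (h : φ.wedgePos i ≤ s) :
    (φ.removeSIM s).insertSIM i (removeSIM_seq_ne hi s) =
      (φ.insertSIM i hi).removeSIM (s + 1) := by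
  refine seq_injective (funext fun n => ?_)
  simp only [insertSIM_seq, removeSIM_seq, wedgePos_removeSIM_of_le h]
  split_ifs <;> first | rfl | omega | (congr 1; omega)

theorem insertSIM_removeSIM_comm_of_gt {φ : SIM} {s p : ℕ} {i : ℤ} (hi : ∀ t, φ.seq t ≠ i)
    (hp : φ.wedgePos i = p + 1) (hs : s ≤ p) :
    (φ.removeSIM s).insertSIM i (removeSIM_seq_ne hi s) = (φ.insertSIM i hi).removeSIM s := by
  refine seq_injective (funext fun n => ?_)
  simp only [insertSIM_seq, removeSIM_seq, wedgePos_removeSIM_of_gt hp hs, hp]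
  split_ifs <;> first | rfl | omega | (congr 1; omega)

end SIM

open SIM

theorem FockF.hom_ext {f g : FockF →ₗ[ℂ] FockF}
    (h : ∀ φ, f (single φ 1) = g (single φ 1)) : f = g :=
  Finsupp.lhom_ext' fun φ => LinearMap.ext_ring (h φ)

theorem neg_one_pow_smul_smul_add_eq_zero {R M : Type*} [Ring R] [AddCommGroup M] [Module R M]
    (v : M) {a b c d : ℕ} (h : a + b + 1 = c + d) :
    (-1 : R) ^ a • (-1 : R) ^ b • v + (-1 : R) ^ c • (-1 : R) ^ d • v = 0 := by
  rw [smul_smul, smul_smul, ← add_smul, ← pow_add, ← pow_add, ← h, pow_succ, mul_neg_one,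
    add_neg_cancel, zero_smul]

theorem psi_single_of_forall_ne {i : ℤ} {φ : SIM} (hi : ∀ s, φ.seq s ≠ i) :
    psi i (single φ 1) = (-1 : ℂ) ^ φ.wedgePos i • single (φ.insertSIM i hi) 1 := by
  simp only [psi, lift_apply, sum_single_index, zero_smul, one_smul]
  exact dif_pos hi

theorem psi_single_of_seq_eq {i : ℤ} {φ : SIM} {s : ℕ} (hs : φ.seq s = i) :
    psi i (single φ 1) = 0 := by
  simp only [psi, lift_apply, sum_single_index, zero_smul, one_smul]
  exact dif_neg fun h => h s hs

theorem psiStar_single_seq (j : ℤ) (φ : SIM) (s : ℕ) (hs : φ.seq s = j) :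
    psiStar j (single φ 1) = (-1 : ℂ) ^ s • single (φ.removeSIM s) 1 := by
  have hj : ∃ t, φ.seq t = j := ⟨s, hs⟩
  have hchoose : hj.choose = s := φ.anti.injective (hj.choose_spec.trans hs.symm)
  simp only [psiStar, lift_apply, sum_single_index, zero_smul, one_smul]
  rw [dif_pos hj, hchoose]

theorem psiStar_single_of_forall_ne {j : ℤ} {φ : SIM} (hj : ∀ s, φ.seq s ≠ j) :
    psiStar j (single φ 1) = 0 := by
  simp only [psiStar, lift_apply, sum_single_index, zero_smul, one_smul]
  exact dif_neg fun ⟨s, hs⟩ => hj s hs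

theorem psi_psi_single_of_seq_eq (i : ℤ) {k : ℤ} {φ : SIM} {t : ℕ} (ht : φ.seq t = k) :
    psi k (psi i (single φ 1)) = 0 := by
  by_cases hi : ∀ s, φ.seq s ≠ i
  · obtain ⟨u, hu⟩ := exists_insertSIM_seq_eq hi t
    rw [psi_single_of_forall_ne hi, map_smul, psi_single_of_seq_eq (hu.trans ht), smul_zero]
  · push Not at hi
    obtain ⟨s, hs⟩ := hi
    rw [psi_single_of_seq_eq hs, map_zero]

theorem psi_psi_single_add (i k : ℤ) (φ : SIM) :
    psi i (psi k (single φ 1)) + psi k (psi i (single φ 1)) = 0 := by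
  wlog hki : k ≤ i generalizing i k
  · rw [add_comm]
    exact this k i (le_of_not_ge hki)
  by_cases hk : ∃ t, φ.seq t = k
  · obtain ⟨t, ht⟩ := hk
    rw [psi_single_of_seq_eq ht, map_zero, psi_psi_single_of_seq_eq i ht, add_zero]
  by_cases hi : ∃ s, φ.seq s = i
  · obtain ⟨s, hs⟩ := hi
    rw [psi_single_of_seq_eq hs, map_zero, psi_psi_single_of_seq_eq k hs, zero_add]
  push Not at hi hk
  rcases hki.eq_or_lt with rfl | hki
  · rw [psi_single_of_forall_ne hk, map_smul,
      psi_single_of_seq_eq (insertSIM_seq_wedgePos φ hk), smul_zero, add_zero]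
  · rw [psi_single_of_forall_ne hk, psi_single_of_forall_ne hi, map_smul, map_smul,
      psi_single_of_forall_ne (insertSIM_seq_ne hk hi hki.ne),
      psi_single_of_forall_ne (insertSIM_seq_ne hi hk hki.ne'), wedgePos_insertSIM_of_lt hk hki,
      wedgePos_insertSIM_of_gt hi hki, insertSIM_comm hi hk hki]
    exact neg_one_pow_smul_smul_add_eq_zero _ (by ring)

theorem psiStar_psiStar_single_of_forall_ne (j : ℤ) {l : ℤ} {φ : SIM}
    (hl : ∀ t, φ.seq t ≠ l) : psiStar l (psiStar j (single φ 1)) = 0 := by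
  by_cases hj : ∃ s, φ.seq s = j
  · obtain ⟨s, rfl⟩ := hj
    rw [psiStar_single_seq _ φ s rfl, map_smul,
      psiStar_single_of_forall_ne (removeSIM_seq_ne hl s), smul_zero]
  · push Not at hj
    rw [psiStar_single_of_forall_ne hj, map_zero]

theorem psiStar_psiStar_single_add (j l : ℤ) (φ : SIM) :
    psiStar j (psiStar l (single φ 1)) + psiStar l (psiStar j (single φ 1)) = 0 := by
  wlog hlj : l ≤ j generalizing j l
  · rw [add_comm]
    exact this l j (le_of_not_ge hlj)
  by_cases hl : ∀ t, φ.seq t ≠ l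
  · rw [psiStar_single_of_forall_ne hl, map_zero, psiStar_psiStar_single_of_forall_ne j hl,
      add_zero]
  by_cases hj : ∀ s, φ.seq s ≠ j
  · rw [psiStar_single_of_forall_ne hj, map_zero, psiStar_psiStar_single_of_forall_ne l hj,
      zero_add]
  push Not at hj hl
  obtain ⟨s, rfl⟩ := hj
  obtain ⟨t, rfl⟩ := hl
  rcases hlj.eq_or_lt with heq | hlt
  · obtain rfl := φ.anti.injective heq
    rw [psiStar_single_seq _ φ t rfl, map_smul,
      psiStar_single_of_forall_ne (φ.removeSIM_seq_ne_seq t), smul_zero, add_zero]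
  have hst : s < t := φ.anti.lt_iff_gt.1 hlt
  obtain ⟨u, rfl⟩ : ∃ u, t = u + 1 := ⟨t - 1, by omega⟩
  have hsu : s ≤ u := by omega
  rw [psiStar_single_seq _ φ _ rfl, psiStar_single_seq _ φ _ rfl, map_smul, map_smul,
    psiStar_single_seq _ _ s (by rw [removeSIM_seq, if_pos (by omega)]),
    psiStar_single_seq _ _ u (by rw [removeSIM_seq, if_neg (by omega)]),
    φ.removeSIM_comm hsu, add_comm]
  exact neg_one_pow_smul_smul_add_eq_zero _ (by ring)

theorem psi_psiStar_single_of_seq_eq {i j : ℤ} {φ : SIM} {t : ℕ} (ht : φ.seq t = i)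
    (hij : i ≠ j) : psi i (psiStar j (single φ 1)) = 0 := by
  by_cases hj : ∃ s, φ.seq s = j
  · obtain ⟨s, rfl⟩ := hj
    have hts : t ≠ s := by
      rintro rfl
      exact hij ht.symm
    obtain ⟨u, hu⟩ := φ.exists_removeSIM_seq_eq hts
    rw [psiStar_single_seq _ φ s rfl, map_smul, psi_single_of_seq_eq (hu.trans ht), smul_zero]
  · push Not at hj
    rw [psiStar_single_of_forall_ne hj, map_zero]

theorem psiStar_psi_single_of_forall_ne {i j : ℤ} {φ : SIM} (hj : ∀ s, φ.seq s ≠ j)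
    (hij : i ≠ j) : psiStar j (psi i (single φ 1)) = 0 := by
  by_cases hi : ∀ s, φ.seq s ≠ i
  · rw [psi_single_of_forall_ne hi, map_smul,
      psiStar_single_of_forall_ne (insertSIM_seq_ne hi hj hij), smul_zero]
  · push Not at hi
    obtain ⟨t, ht⟩ := hi
    rw [psi_single_of_seq_eq ht, map_zero]

theorem psiStar_psi_single_add_of_forall_ne {i : ℤ} {φ : SIM} (hi : ∀ t, φ.seq t ≠ i)
    (s : ℕ) :
    psiStar (φ.seq s) (psi i (single φ 1)) + psi i (psiStar (φ.seq s) (single φ 1)) = 0 := by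
  rw [psi_single_of_forall_ne hi, psiStar_single_seq _ φ s rfl, map_smul, map_smul,
    psi_single_of_forall_ne (removeSIM_seq_ne hi s), add_comm]
  rcases (hi s).lt_or_gt with hlt | hgt
  · have hle : φ.wedgePos i ≤ s := φ.wedgePos_le_of_seq_lt hlt
    rw [psiStar_single_seq (φ.seq s) (φ.insertSIM i hi) (s + 1)
        (by rw [insertSIM_seq, if_neg (by omega), if_neg (by omega)]; rfl),
      wedgePos_removeSIM_of_le hle, insertSIM_removeSIM_comm_of_le hi hle]
    exact neg_one_pow_smul_smul_add_eq_zero _ (by ring)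
  · have hs : s < φ.wedgePos i := by
      by_contra h
      have := φ.anti.antitone (not_lt.1 h)
      have := φ.seq_wedgePos_lt i
      omega
    obtain ⟨p, hp⟩ : ∃ p, φ.wedgePos i = p + 1 := ⟨φ.wedgePos i - 1, by omega⟩
    rw [psiStar_single_seq (φ.seq s) (φ.insertSIM i hi) s
        (by rw [insertSIM_seq, if_pos hs]),
      wedgePos_removeSIM_of_gt hp (by omega), insertSIM_removeSIM_comm_of_gt hi hp (by omega), hp]
    exact neg_one_pow_smul_smul_add_eq_zero _ (by ring)

theorem psiStar_psi_single_add (i j : ℤ) (φ : SIM) :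
    psiStar j (psi i (single φ 1)) + psi i (psiStar j (single φ 1)) =
      if j = i then single φ 1 else 0 := by
  rcases eq_or_ne i j with rfl | hij
  · rw [if_pos rfl]
    by_cases hi : ∀ s, φ.seq s ≠ i
    · rw [psiStar_single_of_forall_ne hi, map_zero, add_zero, psi_single_of_forall_ne hi,
        map_smul, psiStar_single_seq _ _ _ (insertSIM_seq_wedgePos φ hi), removeSIM_insertSIM,
        smul_smul, ← pow_add, Even.neg_one_pow ⟨_, rfl⟩, one_smul]
    · push Not at hi
      obtain ⟨s, rfl⟩ := hi
      rw [psi_single_of_seq_eq rfl, map_zero, zero_add, psiStar_single_seq _ φ s rfl, map_smul,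
        psi_single_of_forall_ne (φ.removeSIM_seq_ne_seq s), wedgePos_removeSIM_seq,
        insertSIM_removeSIM, smul_smul, ← pow_add, Even.neg_one_pow ⟨_, rfl⟩, one_smul]
  rw [if_neg hij.symm]
  by_cases hi : ∃ t, φ.seq t = i
  · obtain ⟨t, ht⟩ := hi
    rw [psi_single_of_seq_eq ht, map_zero, zero_add, psi_psiStar_single_of_seq_eq ht hij]
  by_cases hj : ∀ s, φ.seq s ≠ j
  · rw [psiStar_psi_single_of_forall_ne hj hij, psiStar_single_of_forall_ne hj, map_zero,
      add_zero]
  push Not at hi hj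
  obtain ⟨s, rfl⟩ := hj
  exact psiStar_psi_single_add_of_forall_ne hi s

theorem psi_mul_psi_add (i k : ℤ) : psi i * psi k + psi k * psi i = 0 :=
  FockF.hom_ext (psi_psi_single_add i k)

theorem psiStar_mul_psiStar_add (j l : ℤ) :
    psiStar j * psiStar l + psiStar l * psiStar j = 0 :=
  FockF.hom_ext (psiStar_psiStar_single_add j l)

theorem psiStar_mul_psi_add (j i : ℤ) :
    psiStar j * psi i + psi i * psiStar j = if j = i then 1 else 0 :=
  FockF.hom_ext fun φ => (psiStar_psi_single_add i j φ).trans (by split_ifs <;> rfl)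

theorem mul_mul_sub_mul_mul_of_anticommute {R : Type*} [Ring R] {a b c d x y : R}
    (hac : a * c + c * a = 0) (hbd : b * d + d * b = 0) (hbc : b * c + c * b = x)
    (hda : d * a + a * d = y) (hax : Commute a x) (hcy : Commute c y) :
    a * b * (c * d) - c * d * (a * b) = x * (a * d) - y * (c * b) := by
  have expand : a * b * (c * d) - c * d * (a * b) =
      a * (b * c + c * b) * d - a * c * (b * d + d * b) + (a * c + c * a) * (d * b)
        - c * (d * a + a * d) * b := by
    noncomm_ring
  rw [expand, hbc, hbd, hac, hda, hax.eq, hcy.eq]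
  noncomm_ring

/-- the assignment `E_{ij} ↦ ψ_i ψ_j^*` defines a representation of
`gl_∞` on `F`; equivalently, the operator identity
`[ψ_i ψ_j^*, ψ_k ψ_l^*] = δ_{jk} ψ_i ψ_l^* − δ_{li} ψ_k ψ_j^*` holds on `F`
for all `i, j, k, l ∈ ℤ`. -/
theorem glInfinity_representation (i j k l : ℤ) :
    (psi i ∘ₗ psiStar j) ∘ₗ (psi k ∘ₗ psiStar l) - (psi k ∘ₗ psiStar l) ∘ₗ (psi i ∘ₗ psiStar j)
      = (if j = k then psi i ∘ₗ psiStar l else 0) - (if l = i then psi k ∘ₗ psiStar j else 0) := by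
  have commute_ite (f : Module.End ℂ FockF) (p : Prop) [Decidable p] :
      Commute f (if p then 1 else 0) := by
    split_ifs
    exacts [Commute.one_right f, Commute.zero_right f]
  have key := mul_mul_sub_mul_mul_of_anticommute (R := Module.End ℂ FockF)
    (psi_mul_psi_add i k) (psiStar_mul_psiStar_add j l) (psiStar_mul_psi_add j k)
    (psiStar_mul_psi_add l i)
    (commute_ite _ _) (commute_ite _ _)
  simpa only [ite_mul, one_mul, zero_mul, Module.End.mul_eq_comp] using key
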